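/- For every real a and every half-integer p, the number N_≤(a,p) of a-admissible sequences with total projection p satisfies N_≤(a,p) = ι(a,p) + ∑_{ℓ=1}^{∞} ( N_≤(a − √(ℓ(ℓ+2))/2, p − ℓ/2) + N_≤(a − √(ℓ(ℓ+2))/2, p + ℓ/2) ), where ι(a,p) = 1 if p ≠ 0 and √(|p|(|p|+1)) ≤ a, and ι(a,p) = 0 otherwise; the infinite sum has only finitely many nonzero terms since N_≤(b,q) = 0 for b < √3/2. -/

import Mathlib

/-- The weight of an entry `j : ℤ` encoding the nonzero half-integer `m = j/2`:
`√(|m|(|m|+1)) = √(|j|(|j|+2))/2`. -/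
noncomputable def wt (j : ℤ) : ℝ := Real.sqrt (|(j : ℝ)| * (|(j : ℝ)| + 2)) / 2

/-- The set of `(a,p)`-admissible sequences: nonempty lists of nonzero half-integers
`mᵢ = jᵢ/2` with `∑ᵢ √(|mᵢ|(|mᵢ|+1)) ≤ a` and total projection `∑ᵢ mᵢ = p`.
The half-integer `p` is encoded by the integer `q = 2p`, so the projection constraint
reads `∑ᵢ jᵢ = q`. -/
def admP (a : ℝ) (q : ℤ) : Set (List ℤ) :=
  {l | l ≠ [] ∧ (∀ j ∈ l, j ≠ 0) ∧ (l.map wt).sum ≤ a ∧ l.sum = q}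

/-- `N_≤(a,p)`, the number of `(a,p)`-admissible sequences, with `p = q/2`. -/
noncomputable def NleP (a : ℝ) (q : ℤ) : ℕ := Nat.card (admP a q)

/-! Classify an admissible sequence by its first entry `m₁`. Either the sequence is `(p)` itself,
which accounts for `ι(a,p)`, or `m₁ = ±ℓ/2` with `ℓ ≥ 1` and the remaining entries form an
`(a - √(ℓ(ℓ+2))/2, p ∓ ℓ/2)`-admissible sequence; distinct first entries give disjoint
classes. Every entry has weight at least `1/2`, so the same decomposition proves finiteness by
induction on `⌈2a⌉`, and only `ℓ ≤ 2a` contribute to the sum since `N_≤(b,q) = 0` for `b < 0`. -/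

open Set Function

lemma wt_nonneg (j : ℤ) : 0 ≤ wt j := by
  unfold wt; positivity

lemma wt_neg (j : ℤ) : wt (-j) = wt j := by
  simp [wt]

lemma wt_natCast_add_one (ℓ : ℕ) :
    wt ((ℓ : ℤ) + 1) = Real.sqrt (((ℓ : ℝ) + 1) * (((ℓ : ℝ) + 1) + 2)) / 2 := by
  rw [wt, show (((ℓ : ℤ) + 1 : ℤ) : ℝ) = (ℓ : ℝ) + 1 by push_cast; rfl,
    abs_of_nonneg (by positivity)]

lemma abs_div_two_le_wt (j : ℤ) : |(j : ℝ)| / 2 ≤ wt j := by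
  unfold wt
  gcongr
  exact Real.le_sqrt_of_sq_le (by nlinarith [abs_nonneg (j : ℝ)])

lemma finite_setOf_wt_le (a : ℝ) : {j : ℤ | wt j ≤ a}.Finite := by
  refine (finite_Icc (-⌊2 * a⌋) ⌊2 * a⌋).subset fun j hj => ?_
  have hj : wt j ≤ a := hj
  have h : ((|j| : ℤ) : ℝ) ≤ 2 * a := by
    push_cast; linarith [abs_div_two_le_wt j]
  exact abs_le.mp (Int.le_floor.mpr h)

lemma sum_map_wt_nonneg (l : List ℤ) : 0 ≤ (l.map wt).sum :=
  List.sum_nonneg fun _ hx => by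
    obtain ⟨j, -, rfl⟩ := List.mem_map.mp hx
    exact wt_nonneg j

lemma nonneg_of_mem_admP {a : ℝ} {q : ℤ} {l : List ℤ} (hl : l ∈ admP a q) : 0 ≤ a :=
  (sum_map_wt_nonneg l).trans hl.2.2.1

lemma admP_eq_empty_of_neg {a : ℝ} (ha : a < 0) (q : ℤ) : admP a q = ∅ :=
  eq_empty_of_forall_notMem fun _ hl => ha.not_ge (nonneg_of_mem_admP hl)

lemma singleton_mem_admP_iff {a : ℝ} {q j : ℤ} :
    [j] ∈ admP a q ↔ j ≠ 0 ∧ wt j ≤ a ∧ j = q := by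
  simp [admP]

lemma cons_mem_admP_iff {a : ℝ} {q j : ℤ} {r : List ℤ} (hr : r ≠ []) :
    j :: r ∈ admP a q ↔ j ≠ 0 ∧ r ∈ admP (a - wt j) (q - j) := by
  simp [admP, hr, le_sub_iff_add_le', eq_sub_iff_add_eq', and_assoc]

lemma admP_eq_union (a : ℝ) (q : ℤ) :
    admP a q = (if q ≠ 0 ∧ wt q ≤ a then {[q]} else ∅) ∪
      ⋃ j ∈ {j : ℤ | j ≠ 0 ∧ wt j ≤ a}, (j :: ·) '' admP (a - wt j) (q - j) := by
  ext l
  have hne {b : ℝ} {p : ℤ} : [] ∉ admP b p := fun h => h.1 rfl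
  rcases l with _ | ⟨j, _ | ⟨k, r⟩⟩
  · simp [hne]
  · obtain rfl | hjq := eq_or_ne j q
    · simp [singleton_mem_admP_iff, hne]
    · simp [singleton_mem_admP_iff, hne, hjq]
  · rw [cons_mem_admP_iff (List.cons_ne_nil k r)]
    have hw (hr : k :: r ∈ admP (a - wt j) (q - j)) : wt j ≤ a :=
      sub_nonneg.mp (nonneg_of_mem_admP hr)
    simp +contextual [hw, and_comm]

lemma admP_finite (a : ℝ) (q : ℤ) : (admP a q).Finite := by
  obtain ⟨n, hn⟩ := exists_nat_gt (2 * a)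
  induction n generalizing a q with
  | zero =>
    rw [admP_eq_empty_of_neg (by norm_num at hn; linarith) q]
    exact finite_empty
  | succ n ih =>
    rw [admP_eq_union]
    refine Finite.union (by split_ifs <;> simp) <|
      ((finite_setOf_wt_le a).subset fun j hj => hj.2).biUnion fun j hj => (ih _ _ ?_).image _
    have : (1 : ℝ) ≤ |(j : ℝ)| := by exact_mod_cast Int.one_le_abs hj.1
    push_cast at hn
    linarith [abs_div_two_le_wt j]

lemma nonneg_of_NleP_ne_zero {a : ℝ} {q : ℤ} (h : NleP a q ≠ 0) : 0 ≤ a := by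
  by_contra ha
  exact h (by rw [NleP, admP_eq_empty_of_neg (not_le.mp ha)]; simp)

lemma NleP_eq_ite_add_finsum (a : ℝ) (q : ℤ) :
    NleP a q = (if q ≠ 0 ∧ wt q ≤ a then 1 else 0) +
      ∑ᶠ j ∈ ({0}ᶜ : Set ℤ), NleP (a - wt j) (q - j) := by
  have ht : {j : ℤ | j ≠ 0 ∧ wt j ≤ a}.Finite :=
    (finite_setOf_wt_le a).subset fun j hj => hj.2
  rw [NleP, Nat.card_coe_set_eq, admP_eq_union, ncard_union_eq ?_ (by split_ifs <;> simp)
    (ht.biUnion fun j _ => (admP_finite _ _).image _),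
    ht.ncard_biUnion (fun j _ => (admP_finite _ _).image _) ?_]
  · congr 1
    · split_ifs <;> simp
    · rw [finsum_mem_congr rfl fun j _ => ncard_image_of_injective _ List.cons_injective]
      -- an index with `a < wt j` contributes `N_≤(a - wt j, _) = 0`
      refine finsum_mem_inter_support_eq' _ _ _ fun j hj => ?_
      have := sub_nonneg.mp (nonneg_of_NleP_ne_zero (by rwa [NleP, Nat.card_coe_set_eq]))
      simp [this]
  · exact fun i _ j _ hij => disjoint_left.mpr fun l ⟨_, _, hl⟩ ⟨_, _, hl'⟩ =>
      hij (List.cons_eq_cons.mp (hl.trans hl'.symm)).1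
  · refine disjoint_left.mpr fun l hl hl' => ?_
    obtain ⟨j, -, r, hr, rfl⟩ := by simpa using hl'
    split_ifs at hl
    · exact hr.1 (List.cons_eq_cons.mp hl).2
    · exact hl

lemma finsum_mem_compl_zero_eq_tsum {G : Type*} [AddCommGroup G] [TopologicalSpace G]
    [IsTopologicalAddGroup G] [T2Space G] (f : ℤ → G) (hf : (support f).Finite) :
    ∑ᶠ j ∈ ({0}ᶜ : Set ℤ), f j = ∑' n : ℕ, (f (n + 1) + f (-(n + 1))) := by
  have hg : HasFiniteSupport (({0}ᶜ : Set ℤ).indicator f) := by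
    rw [HasFiniteSupport, support_indicator]
    exact hf.inter_of_right _
  have hsum := (summable_of_hasFiniteSupport hg).hasSum.nat_add_neg
  rw [← hasSum_nat_add_iff' 1] at hsum
  rw [finsum_mem_def, ← tsum_eq_finsum (L := .unconditional ℤ) hg]
  convert hsum.tsum_eq.symm using 2
  · simp
  · funext n
    rw [indicator_of_mem (mem_compl_singleton_iff.mpr (by omega)),
      indicator_of_mem (mem_compl_singleton_iff.mpr (by omega))]
    norm_cast

/-- the functional equation
`N_≤(a,p) = ι(a,p) + ∑_{ℓ≥1} (N_≤(a-√(ℓ(ℓ+2))/2, p-ℓ/2) + N_≤(a-√(ℓ(ℓ+2))/2, p+ℓ/2))`,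
where `ι(a,p) = 1` if `p ≠ 0` and `√(|p|(|p|+1)) ≤ a` and `ι(a,p) = 0` otherwise.
With `p = q/2` one has `√(|p|(|p|+1)) = √(|q|(|q|+2))/2`. -/
theorem stmt_4 (a : ℝ) (q : ℤ) :
    (NleP a q : ℝ) =
      (if q ≠ 0 ∧ Real.sqrt (|(q : ℝ)| * (|(q : ℝ)| + 2)) / 2 ≤ a then 1 else 0) +
      ∑' ℓ : ℕ,
        ((NleP (a - Real.sqrt (((ℓ : ℝ) + 1) * (((ℓ : ℝ) + 1) + 2)) / 2)
            (q - ((ℓ : ℤ) + 1)) : ℝ) +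
         (NleP (a - Real.sqrt (((ℓ : ℝ) + 1) * (((ℓ : ℝ) + 1) + 2)) / 2)
            (q + ((ℓ : ℤ) + 1)) : ℝ)) := by
  have hfin : (support fun j : ℤ => NleP (a - wt j) (q - j)).Finite :=
    (finite_setOf_wt_le a).subset fun j hj => sub_nonneg.mp (nonneg_of_NleP_ne_zero hj)
  have hcast := (Nat.castAddMonoidHom ℝ).map_finsum_mem' (hfin.inter_of_right {0}ᶜ)
  simp only [Nat.coe_castAddMonoidHom] at hcast
  have hfin_real : (support fun j : ℤ => (NleP (a - wt j) (q - j) : ℝ)).Finite :=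
    hfin.subset fun j hj => Nat.cast_ne_zero.mp hj
  rw [NleP_eq_ite_add_finsum, Nat.cast_add, hcast, finsum_mem_compl_zero_eq_tsum _ hfin_real]
  simp only [Nat.cast_ite, Nat.cast_one, Nat.cast_zero, wt_neg, wt_natCast_add_one, sub_neg_eq_add]
  rfl
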